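/- Let L > 0 and 0 ≤ t ≤ 2L. Then ∫_{−2}^{2} 2u²·max( L·√(4−u²)/(2π) − t/(2π), 0 ) du = ( (t³ − 10L²t)·√(4L²−t²) + 24L⁴·arcsin(√(4L²−t²)/(2L)) ) / (6πL³). -/

import Mathlib

/-!
Put `a = √(4L² − t²)/L ∈ [0, 2]`, so that `t = L√(4 − a²)`. The integrand is then
`(L/π) u² (√(4 − u²) − √(4 − a²))` on `[−a, a]` and vanishes outside it, so everything reduces to
`∫_{−a}^{a} u² √(4 − u²) du`, which has the elementary primitive
`2 arcsin(u/2) − u(2 − u²)√(4 − u²)/4`.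
-/

open MeasureTheory Real

theorem hasDerivAt_two_arcsin_half_sub_sqrt_four_sub_sq {u : ℝ} (hu₁ : -2 < u) (hu₂ : u < 2) :
    HasDerivAt (fun x => 2 * arcsin (x / 2) - x * (2 - x ^ 2) * √(4 - x ^ 2) / 4)
      (u ^ 2 * √(4 - u ^ 2)) u := by
  have hpos : 0 < 4 - u ^ 2 := by nlinarith
  set s := √(4 - u ^ 2) with hs
  have hs_pos : 0 < s := sqrt_pos.mpr hpos
  have hs_sq : s ^ 2 = 4 - u ^ 2 := sq_sqrt hpos.le
  have hsqrt_half : √(1 - (u / 2) ^ 2) = s / 2 := by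
    rw [show 1 - (u / 2) ^ 2 = (4 - u ^ 2) / 2 ^ 2 by ring, sqrt_div hpos.le,
      sqrt_sq zero_le_two]
  have harcsin : HasDerivAt (fun x => arcsin (x / 2)) (1 / s) u := by
    have h : HasDerivAt (fun x => arcsin (x / 2)) (1 / √(1 - (u / 2) ^ 2) * (1 / 2)) u :=
      (hasDerivAt_arcsin (by linarith) (by linarith)).comp u ((hasDerivAt_id u).div_const 2)
    convert h using 1
    rw [hsqrt_half]
    field_simp
  have hsqrt : HasDerivAt (fun x => √(4 - x ^ 2)) (-u / s) u := by
    refine (((hasDerivAt_pow 2 u).const_sub 4).sqrt hpos.ne').congr_deriv ?_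
    rw [← hs]
    field_simp
    norm_num
  have hpoly : HasDerivAt (fun x => x * (2 - x ^ 2)) (2 - 3 * u ^ 2) u := by
    refine ((hasDerivAt_id u).mul ((hasDerivAt_pow 2 u).const_sub 2)).congr_deriv ?_
    simp only [id_eq, Nat.cast_ofNat]
    ring
  refine ((harcsin.const_mul 2).sub ((hpoly.mul hsqrt).div_const 4)).congr_deriv ?_
  rw [← hs]
  field_simp
  linear_combination (-(2 + u ^ 2)) * hs_sq

theorem integral_sq_mul_sqrt_four_sub_sq {a : ℝ} (ha₀ : 0 ≤ a) (ha₂ : a ≤ 2) :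
    ∫ u in -a..a, u ^ 2 * √(4 - u ^ 2) =
      4 * arcsin (a / 2) - a * (2 - a ^ 2) * √(4 - a ^ 2) / 2 := by
  rw [intervalIntegral.integral_eq_sub_of_hasDerivAt_of_le (by linarith) (by fun_prop)
    (fun u hu => hasDerivAt_two_arcsin_half_sub_sqrt_four_sub_sq (by linarith [hu.1])
      (by linarith [hu.2])) (Continuous.intervalIntegrable (by fun_prop) _ _)]
  rw [neg_div, arcsin_neg, neg_sq]
  ring

theorem intervalIntegral.integral_eq_integral_of_eqOn_zero_outside {E : Type*}
    [NormedAddCommGroup E] [NormedSpace ℝ E] {f : ℝ → E} {a b c d : ℝ}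
    (hab : a ≤ b) (hbc : b ≤ c) (hcd : c ≤ d) (hf : IntervalIntegrable f volume a d)
    (hfab : Set.EqOn f 0 (Set.Icc a b)) (hfcd : Set.EqOn f 0 (Set.Icc c d)) :
    ∫ x in a..d, f x = ∫ x in b..c, f x := by
  have hsub : ∀ {x y}, a ≤ x → x ≤ y → y ≤ d → IntervalIntegrable f volume x y :=
    fun hx hxy hy => hf.mono_set (by
      rw [Set.uIcc_of_le hxy, Set.uIcc_of_le (hx.trans (hxy.trans hy))]
      exact Set.Icc_subset_Icc hx hy)
  have hzero : ∀ {x y}, x ≤ y → Set.EqOn f 0 (Set.Icc x y) → ∫ z in x..y, f z = 0 :=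
    fun hxy hf0 => by
      rw [intervalIntegral.integral_congr (g := 0) (by rwa [Set.uIcc_of_le hxy])]
      simp
  rw [← intervalIntegral.integral_add_adjacent_intervals (hsub le_rfl hab (hbc.trans hcd))
      (hsub hab (hbc.trans hcd) le_rfl),
    ← intervalIntegral.integral_add_adjacent_intervals (hsub hab hbc hcd)
      (hsub (hab.trans hbc) hcd le_rfl),
    hzero hab hfab, hzero hcd hfcd, zero_add, add_zero]

theorem integral_sq_mul_max_sqrt_four_sub_sq_sub {a : ℝ} (ha₀ : 0 ≤ a) (ha₂ : a ≤ 2) :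
    ∫ u in (-2)..2, u ^ 2 * max (√(4 - u ^ 2) - √(4 - a ^ 2)) 0 =
      4 * arcsin (a / 2) - a * (a ^ 2 + 6) * √(4 - a ^ 2) / 6 := by
  have hvanish : ∀ u, a ^ 2 ≤ u ^ 2 → u ^ 2 * max (√(4 - u ^ 2) - √(4 - a ^ 2)) 0 = 0 :=
    fun u hu => by
      rw [max_eq_right (sub_nonpos.mpr (sqrt_le_sqrt (by linarith))), mul_zero]
  have hpositive : Set.EqOn (fun u => u ^ 2 * max (√(4 - u ^ 2) - √(4 - a ^ 2)) 0)
      (fun u => u ^ 2 * √(4 - u ^ 2) - √(4 - a ^ 2) * u ^ 2) (Set.uIcc (-a) a) := by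
    intro u hu
    rw [Set.uIcc_of_le (by linarith)] at hu
    have hu2 : u ^ 2 ≤ a ^ 2 := sq_le_sq' hu.1 hu.2
    simp only
    rw [max_eq_left (sub_nonneg.mpr (sqrt_le_sqrt (by linarith)))]
    ring
  rw [intervalIntegral.integral_eq_integral_of_eqOn_zero_outside (b := -a) (c := a)
      (by linarith) (by linarith) (by linarith) (Continuous.intervalIntegrable (by fun_prop) _ _)
      (fun u hu => hvanish u (by nlinarith [hu.1, hu.2]))
      (fun u hu => hvanish u (by nlinarith [hu.1, hu.2])),
    intervalIntegral.integral_congr hpositive,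
    intervalIntegral.integral_sub (Continuous.intervalIntegrable (by fun_prop) _ _)
      (Continuous.intervalIntegrable (by fun_prop) _ _),
    integral_sq_mul_sqrt_four_sub_sq ha₀ ha₂, intervalIntegral.integral_const_mul, integral_pow]
  ring

theorem gue_refined_form_factor_beta_sq (L t : ℝ) (hL : 0 < L) (ht0 : 0 ≤ t)
    (ht : t ≤ 2 * L) :
    (∫ u in (-2:ℝ)..2,
        2 * u^2 * max (L * Real.sqrt (4 - u^2) / (2 * Real.pi) - t / (2 * Real.pi)) 0)
      = ((t^3 - 10 * L^2 * t) * Real.sqrt (4 * L^2 - t^2)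
          + 24 * L^4 * Real.arcsin (Real.sqrt (4 * L^2 - t^2) / (2 * L)))
        / (6 * Real.pi * L^3) := by
  set s := √(4 * L ^ 2 - t ^ 2)
  have hs_sq : s ^ 2 = 4 * L ^ 2 - t ^ 2 := sq_sqrt (by nlinarith)
  set a := s / L
  have ha₀ : 0 ≤ a := by positivity
  have ha₂ : a ≤ 2 := by
    rw [div_le_iff₀ hL]
    nlinarith [sqrt_nonneg (4 * L ^ 2 - t ^ 2)]
  have hcutoff : √(4 - a ^ 2) = t / L := by
    rw [show 4 - a ^ 2 = (t / L) ^ 2 by simp only [a]; field_simp; linarith,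
      sqrt_sq (by positivity)]
  have hintegrand : ∀ u : ℝ,
      2 * u ^ 2 * max (L * √(4 - u ^ 2) / (2 * π) - t / (2 * π)) 0 =
        L / π * (u ^ 2 * max (√(4 - u ^ 2) - √(4 - a ^ 2)) 0) := fun u => calc
      _ = 2 * u ^ 2 * max (L / (2 * π) * (√(4 - u ^ 2) - √(4 - a ^ 2))) (L / (2 * π) * 0) := by
        rw [hcutoff, mul_zero]
        field_simp
      _ = _ := by
        rw [← mul_max_of_nonneg _ _ (by positivity)]
        ring
  simp_rw [hintegrand]
  rw [intervalIntegral.integral_const_mul, integral_sq_mul_max_sqrt_four_sub_sq_sub ha₀ ha₂,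
    hcutoff, show a / 2 = s / (2 * L) by ring]
  simp only [a]
  field_simp
  linear_combination (-(s * t)) * hs_sq
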